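/- For any rooted graph G_*^v with root v and any N ≥ |V(G)|, X_0(G_*^v;x_0,x_1,…,x_N) = Σ_{S ⊆ E(G)} (−1)^{|S|} · p_{λ_v^-(G_S)}(x_0,x_1,…,x_N) · x_0^{λ_v^+(G_S)}. -/

import Mathlib

open MvPolynomial

attribute [local instance 10] Classical.propDecidable

/-- The finset of proper colorings of `G` with color set `Fin C`. -/
noncomputable def properColorings {V : Type} [Fintype V] (G : SimpleGraph V) (C : ℕ) :
    Finset (V → Fin C) :=
  Finset.univ.filter fun κ => ∀ u w, G.Adj u w → κ u ≠ κ w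

/-- `X_0(G_*; x_0,…,x_N)`: weighted sum over proper colorings with color set `{0,…,N}`
in which the root `r` gets color `0`. -/
noncomputable def X0 {V : Type} [Fintype V] (G : SimpleGraph V) (r : V) (N : ℕ) :
    MvPolynomial (Fin (N+1)) ℚ :=
  ∑ κ ∈ (properColorings G (N+1)).filter (fun κ => κ r = 0), ∏ v : V, X (κ v)

/-- The power sum `p_k(x_0,…,x_N) = x_0^k + ⋯ + x_N^k`. -/
noncomputable def psum (N k : ℕ) : MvPolynomial (Fin (N+1)) ℚ :=
  ∑ i : Fin (N+1), X i ^ k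

/-- The number of vertices in the connected component `c` of `H`. -/
noncomputable def compCard {V : Type} [Fintype V] (H : SimpleGraph V)
    (c : H.ConnectedComponent) : ℕ :=
  (Finset.univ.filter (fun v => H.connectedComponentMk v = c)).card

/-! Inclusion–exclusion over the edges: the indicator that `κ` is proper is
`∏_{e ∈ E(G)} (1 - [κ is constant on e]) = ∑_{S ⊆ E(G)} (-1)^{|S|} [κ is constant on S]`,
and `κ` is constant on `S` iff it is constant on every connected component of `G_S`.
Such colorings with `κ(v) = 0` are a free choice of one color per component, except that the
component of `v` is forced to color `0`; the weight of a component of size `k` colored `i`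
is `x_i^k`, so summing gives `p_{λ_v^-(G_S)} · x_0^{λ_v^+(G_S)}`. -/

open Finset SimpleGraph

namespace SimpleGraph

variable {V α : Type*}

theorem eq_of_reachable_fromEdgeSet {S : Set (Sym2 V)} {κ : V → α}
    (hκ : ∀ e ∈ S, (e.map κ).IsDiag) {u w : V} (h : (fromEdgeSet S).Reachable u w) :
    κ u = κ w := by
  rw [reachable_iff_reflTransGen] at h
  induction h with
  | refl => rfl
  | tail _ hadj ih => exact ih.trans (by simpa using hκ _ ((fromEdgeSet_adj S).1 hadj).1)

theorem forall_isDiag_map_iff_constant_on_components (S : Set (Sym2 V)) (κ : V → α) :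
    (∀ e ∈ S, (e.map κ).IsDiag) ↔ ∀ u w, (fromEdgeSet S).Reachable u w → κ u = κ w := by
  refine ⟨fun hκ u w => eq_of_reachable_fromEdgeSet hκ, fun hκ e he => ?_⟩
  induction e using Sym2.ind with
  | _ u w =>
    rw [Sym2.map_mk, Sym2.mk_isDiag_iff]
    by_cases huw : u = w
    · rw [huw]
    · exact hκ u w ((fromEdgeSet_adj S).2 ⟨he, huw⟩).reachable

theorem forall_adj_ne_iff_forall_edge_not_isDiag (G : SimpleGraph V) (κ : V → α) :
    (∀ u w, G.Adj u w → κ u ≠ κ w) ↔ ∀ e ∈ G.edgeSet, ¬ (e.map κ).IsDiag := by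
  simp [Sym2.forall]

theorem boole_forall_adj_ne_eq_sum_powerset {R : Type*} [CommRing R] [Fintype V]
    (G : SimpleGraph V) [DecidableEq α] (κ : V → α) :
    (if ∀ u w, G.Adj u w → κ u ≠ κ w then 1 else 0 : R) =
      ∑ S ∈ G.edgeFinset.powerset, (-1) ^ #S *
        if ∀ u w, (fromEdgeSet (S : Set (Sym2 V))).Reachable u w → κ u = κ w then 1 else 0 := by
  calc (if ∀ u w, G.Adj u w → κ u ≠ κ w then 1 else 0 : R)
      = ∏ e ∈ G.edgeFinset, (if ¬(e.map κ).IsDiag then 1 else 0) := by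
        simp_rw [prod_boole, mem_edgeFinset, forall_adj_ne_iff_forall_edge_not_isDiag]
    _ = ∏ e ∈ G.edgeFinset, (1 - if (e.map κ).IsDiag then 1 else 0) :=
        prod_congr rfl fun e _ => by split_ifs <;> simp
    _ = ∑ S ∈ G.edgeFinset.powerset, (-1) ^ #S * ∏ e ∈ S, if (e.map κ).IsDiag then 1 else 0 := by
        simp only [prod_sub, prod_const_one, mul_one]
    _ = _ := sum_congr rfl fun S _ => by
        rw [prod_boole]
        congr 2
        exact propext (forall_isDiag_map_iff_constant_on_components _ κ)

end SimpleGraph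

section Colorings

variable {V : Type} [Fintype V]

theorem prod_comp_connectedComponentMk {M : Type*} [CommMonoid M] (H : SimpleGraph V)
    [Fintype H.ConnectedComponent] (g : H.ConnectedComponent → M) :
    ∏ u, g (H.connectedComponentMk u) = ∏ c, g c ^ compCard H c := by
  rw [prod_comp, image_univ_of_surjective fun c => c.exists_rep]
  rfl

theorem sum_rooted_constant_on_components_eq_prod_psum (H : SimpleGraph V) [DecidableRel H.Adj]
    [Fintype H.ConnectedComponent] (v : V) (N : ℕ) :
    ∑ κ ∈ univ.filter (fun κ : V → Fin (N+1) => κ v = 0 ∧ ∀ u w, H.Reachable u w → κ u = κ w),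
      ∏ u, (X (κ u) : MvPolynomial (Fin (N+1)) ℚ)
    = (∏ c ∈ univ.erase (H.connectedComponentMk v), psum N (compCard H c)) *
        X 0 ^ compCard H (H.connectedComponentMk v) := by
  set cv := H.connectedComponentMk v
  let t : H.ConnectedComponent → Finset (Fin (N+1)) := fun c => if c = cv then {0} else univ
  have hreindex : ∑ κ ∈ univ.filter (fun κ : V → Fin (N+1) => κ v = 0 ∧
        ∀ u w, H.Reachable u w → κ u = κ w), ∏ u, (X (κ u) : MvPolynomial (Fin (N+1)) ℚ)
      = ∑ f ∈ Fintype.piFinset t, ∏ u, X (f (H.connectedComponentMk u)) := by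
    symm
    refine sum_nbij' (· ∘ H.connectedComponentMk) (fun κ c => κ c.out) ?_ ?_ ?_ ?_ (fun _ _ => rfl)
    · intro f hf
      have hcv : f cv = 0 := by simpa [t] using Fintype.mem_piFinset.1 hf cv
      exact mem_filter.2 ⟨mem_univ _, hcv, fun u w h => congrArg f (ConnectedComponent.sound h)⟩
    · intro κ hκ
      obtain ⟨-, hκv, hκ⟩ := mem_filter.1 hκ
      refine Fintype.mem_piFinset.2 fun c => ?_
      by_cases hc : c = cv
      · simpa [t, hc, ← hκv] using hκ _ _ (ConnectedComponent.exact cv.out_eq)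
      · simp [t, hc]
    · exact fun f _ => funext fun c => congrArg f c.out_eq
    · intro κ hκ
      obtain ⟨-, hκv, hκ⟩ := mem_filter.1 hκ
      exact funext fun u => hκ _ _ (ConnectedComponent.exact (H.connectedComponentMk u).out_eq)
  calc _ = ∑ f ∈ Fintype.piFinset t,
          ∏ c, (X (f c) : MvPolynomial (Fin (N+1)) ℚ) ^ compCard H c := by
        rw [hreindex]
        exact sum_congr rfl fun f _ => prod_comp_connectedComponentMk H (fun c => X (f c))
    _ = ∏ c, ∑ j ∈ t c, X j ^ compCard H c := by rw [prod_univ_sum]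
    _ = _ := by
        rw [← mul_prod_erase univ _ (mem_univ cv), mul_comm]
        congr 1
        · refine prod_congr rfl fun c hc => ?_
          simp [t, ne_of_mem_erase hc, _root_.psum]
        · simp [t]

end Colorings

theorem stmt17_general {V : Type} [Fintype V] (G : SimpleGraph V) (v : V) (N : ℕ) :
    X0 G v N =
      ∑ S ∈ G.edgeFinset.powerset,
        (-1 : MvPolynomial (Fin (N+1)) ℚ) ^ S.card *
          ((∏ c ∈ (Finset.univ :
                Finset (SimpleGraph.fromEdgeSet (↑S : Set (Sym2 V))).ConnectedComponent).erase
                ((SimpleGraph.fromEdgeSet (↑S : Set (Sym2 V))).connectedComponentMk v),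
              psum N (compCard (SimpleGraph.fromEdgeSet (↑S : Set (Sym2 V))) c)) *
            X 0 ^ compCard (SimpleGraph.fromEdgeSet (↑S : Set (Sym2 V)))
              ((SimpleGraph.fromEdgeSet (↑S : Set (Sym2 V))).connectedComponentMk v)) := by
  calc X0 G v N
      = ∑ κ ∈ univ.filter (fun κ : V → Fin (N+1) => κ v = 0),
          (if ∀ u w, G.Adj u w → κ u ≠ κ w then 1 else 0) * ∏ u, X (κ u) := by
        rw [X0, properColorings, filter_comm, sum_filter]
        simp_rw [boole_mul]
    _ = ∑ κ ∈ univ.filter (fun κ : V → Fin (N+1) => κ v = 0), ∑ S ∈ G.edgeFinset.powerset,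
          (-1) ^ #S * ((if ∀ u w, (fromEdgeSet (S : Set (Sym2 V))).Reachable u w → κ u = κ w
            then 1 else 0) * ∏ u, X (κ u)) := by
        simp_rw [boole_forall_adj_ne_eq_sum_powerset, sum_mul, mul_assoc]
    _ = ∑ S ∈ G.edgeFinset.powerset, (-1) ^ #S *
          ∑ κ ∈ univ.filter (fun κ : V → Fin (N+1) => κ v = 0 ∧
            ∀ u w, (fromEdgeSet (S : Set (Sym2 V))).Reachable u w → κ u = κ w), ∏ u, X (κ u) := by
        rw [sum_comm]
        simp_rw [← mul_sum, boole_mul, ← sum_filter, filter_filter]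
    _ = _ := by
        simp_rw [sum_rooted_constant_on_components_eq_prod_psum]

/-- Power-sum expansion of the rooted chromatic polynomial:
`X_0(G_*^v) = Σ_{S ⊆ E(G)} (−1)^{|S|} p_{λ_v^-(G_S)}(x_0,…,x_N) x_0^{λ_v^+(G_S)}`,
where `G_S` is the spanning subgraph with edge set `S`, `λ_v^+(G_S)` is the size of the
component of `v`, and `p_{λ_v^-(G_S)}` is the product of power sums over the remaining
components. -/
theorem stmt17 {V : Type} [Fintype V] (G : SimpleGraph V) (v : V) (N : ℕ)
    (hN : Fintype.card V ≤ N) :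
    X0 G v N =
      ∑ S ∈ G.edgeFinset.powerset,
        (-1 : MvPolynomial (Fin (N+1)) ℚ) ^ S.card *
          ((∏ c ∈ (Finset.univ :
                Finset (SimpleGraph.fromEdgeSet (↑S : Set (Sym2 V))).ConnectedComponent).erase
                ((SimpleGraph.fromEdgeSet (↑S : Set (Sym2 V))).connectedComponentMk v),
              psum N (compCard (SimpleGraph.fromEdgeSet (↑S : Set (Sym2 V))) c)) *
            X 0 ^ compCard (SimpleGraph.fromEdgeSet (↑S : Set (Sym2 V)))
              ((SimpleGraph.fromEdgeSet (↑S : Set (Sym2 V))).connectedComponentMk v)) :=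
  stmt17_general G v N
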